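/- arXiv:1909.12351 — 4 statements merged into one kernel-verified Lean document; each statement's English description precedes it below -/
import Mathlib

section
/- For every integer k > 0, every caterpillar is k-cordial. -/
/-!
List the vertices of the caterpillar along its spine `s₀, s₁, …` as
`s₀, legs of s₀, s₁, legs of s₁, …`. Every vertex `v` after `s₀` is then preceded by its
neighbour `u` towards `s₀` (its spine vertex, or the previous spine vertex), and all entries
strictly between `u` and `v` are legs of `u`, so they have the colour of `v` in the
2-colouring of the tree. Label the vertices `0, …, n - 1` by their position after stably moving
one colour class, of size `F`, to the front. The labels of `u` and `v` then add up to
`F + (position of v) - 1`: every entry listed before `v` is counted once, except `u` itself.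
So the `n - 1` edge sums are consecutive integers as well, and a run of consecutive integers
meets every residue class modulo `k` equally often, up to one.
-/

/-- The induced weight of an edge: the sum (mod `k`) of the labels of its endpoints. -/
def edgeWeight {V : Type} (k : ℕ) (f : V → ZMod k) (e : Sym2 V) : ZMod k :=
  Sym2.lift ⟨fun u v => f u + f v, fun u v => add_comm _ _⟩ e

/-- `f` is a `k`-cordial labeling of `G`: each label appears on at most one more vertex
than any other label, and each induced edge-weight appears on at most one more edge than
any other edge-weight. -/
def IsCordialLabeling {V : Type} [Fintype V] [DecidableEq V] (k : ℕ)
    (G : SimpleGraph V) [DecidableRel G.Adj] (f : V → ZMod k) : Prop :=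
  (∀ a b : ZMod k,
    ((Finset.univ.filter (fun v => f v = a)).card : ℤ) -
      ((Finset.univ.filter (fun v => f v = b)).card : ℤ) ≤ 1) ∧
  (∀ a b : ZMod k,
    ((G.edgeFinset.filter (fun e => edgeWeight k f e = a)).card : ℤ) -
      ((G.edgeFinset.filter (fun e => edgeWeight k f e = b)).card : ℤ) ≤ 1)
/-- `G` is a caterpillar: a tree having a maximum-length path `P` such that every
vertex is at distance at most one from `P`. -/
def IsCaterpillar {V : Type} [Fintype V] (G : SimpleGraph V) : Prop :=
  G.IsTree ∧ ∃ (a b : V) (P : G.Walk a b), P.IsPath ∧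
    (∀ (c d : V) (Q : G.Walk c d), Q.IsPath → Q.length ≤ P.length) ∧
    (∀ v : V, ∃ u ∈ P.support, G.dist v u ≤ 1)

open Finset

theorem card_filter_range_natCast_eq {k : ℕ} (hk : 0 < k) (N : ℕ) (r : ZMod k) :
    #{i ∈ range N | ((i : ℕ) : ZMod k) = r} = N / k + if r.val < N % k then 1 else 0 := by
  have : NeZero k := ⟨hk.ne'⟩
  rw [← Nat.mod_eq_of_lt r.val_lt, ← Nat.count_modEq_card N hk, Nat.count_eq_card_filter_range]
  congr 1
  ext i
  rw [mem_filter, mem_filter, ← ZMod.natCast_eq_natCast_iff, ZMod.natCast_zmod_val]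

theorem card_filter_Ico_natCast_le_succ (k t N : ℕ) (a b : ZMod k) :
    #{j ∈ Ico t (t + N) | ((j : ℕ) : ZMod k) = a} ≤
      #{j ∈ Ico t (t + N) | ((j : ℕ) : ZMod k) = b} + 1 := by
  have hshift (r : ZMod k) : #{j ∈ Ico t (t + N) | ((j : ℕ) : ZMod k) = r} =
      #{i ∈ range N | ((i : ℕ) : ZMod k) = r - t} := by
    have hIco := map_add_left_Ico 0 N t
    rw [add_zero] at hIco
    rw [← Nat.Ico_zero_eq_range, ← hIco, filter_map, card_map]
    simp [eq_sub_iff_add_eq, add_comm]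
  rw [hshift, hshift]
  rcases k.eq_zero_or_pos with rfl | hk
  · refine (card_le_one.mpr fun i hi j hj => ?_).trans (Nat.le_add_left _ _)
    simp only [mem_filter] at hi hj
    exact_mod_cast hi.2.trans hj.2.symm
  · rw [card_filter_range_natCast_eq hk, card_filter_range_natCast_eq hk]
    split_ifs <;> omega

theorem card_filter_natCast_sub_card_filter_natCast_le_one {α : Type*} (k : ℕ) {s : Finset α}
    {g : α → ℕ} {t : ℕ} (hinj : Set.InjOn g s) (hmaps : ∀ x ∈ s, g x ∈ Ico t (t + #s))
    (a b : ZMod k) :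
    (#{x ∈ s | (g x : ZMod k) = a} : ℤ) - #{x ∈ s | (g x : ZMod k) = b} ≤ 1 := by
  have himage : s.image g = Ico t (t + #s) := by
    refine eq_of_subset_of_card_le (fun j hj => ?_) ?_
    · obtain ⟨x, hx, rfl⟩ := mem_image.mp hj
      exact hmaps x hx
    · rw [card_image_of_injOn hinj, Nat.card_Ico]
      omega
  have hcount (r : ZMod k) :
      #{x ∈ s | (g x : ZMod k) = r} = #{j ∈ Ico t (t + #s) | ((j : ℕ) : ZMod k) = r} := by
    rw [← himage, filter_image, card_image_of_injOn (hinj.mono (filter_subset _ s))]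
  have := card_filter_Ico_natCast_le_succ k t #s a b
  rw [hcount, hcount]
  omega

def edgeLabelSum {V : Type} (g : V → ℕ) (e : Sym2 V) : ℕ :=
  Sym2.lift ⟨fun u v => g u + g v, fun _ _ => add_comm _ _⟩ e

theorem edgeWeight_natCast {V : Type} (k : ℕ) (g : V → ℕ) (e : Sym2 V) :
    edgeWeight k (fun v => (g v : ZMod k)) e = edgeLabelSum g e := by
  induction e using Sym2.ind with
  | h u v => simp [edgeWeight, edgeLabelSum]

theorem isCordialLabeling_natCast {V : Type} [Fintype V] [DecidableEq V] (k : ℕ)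
    (G : SimpleGraph V) [DecidableRel G.Adj] {g : V → ℕ} (hinj : g.Injective)
    (hlt : ∀ v, g v < Fintype.card V) {t : ℕ}
    (hinj_sum : Set.InjOn (edgeLabelSum g) G.edgeFinset)
    (hsum : ∀ e ∈ G.edgeFinset, edgeLabelSum g e ∈ Ico t (t + #G.edgeFinset)) :
    IsCordialLabeling k G (fun v => (g v : ZMod k)) := by
  refine ⟨card_filter_natCast_sub_card_filter_natCast_le_one k (t := 0) hinj.injOn
    (fun v _ => by simpa using hlt v), fun a b => ?_⟩
  simp only [edgeWeight_natCast]
  exact card_filter_natCast_sub_card_filter_natCast_le_one k hinj_sum hsum a b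

namespace List

variable {α : Type*}

def stablePartition (p : α → Bool) (l : List α) : List α := l.filter p ++ l.filter (!p ·)

theorem stablePartition_perm (p : α → Bool) (l : List α) : (l.stablePartition p).Perm l :=
  filter_append_perm p l

def IsCaterpillarOrder (R : α → α → Prop) (l : List α) : Prop :=
  ∀ v ∈ l.tail, ∃ u A M B, l = A ++ u :: (M ++ v :: B) ∧ ∀ w ∈ v :: M, R u w

theorem IsChain.isCaterpillarOrder_flatMap {R : α → α → Prop} {f : α → List α} :
    ∀ {L : List α}, L.IsChain R → (∀ s ∈ L, ∀ w ∈ f s, R s w) →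
      IsCaterpillarOrder R (L.flatMap fun s => s :: f s)
  | [], _, _ => by simp [IsCaterpillarOrder]
  | s :: L, hL, hf => by
    intro v hv
    rw [flatMap_cons, cons_append, tail_cons, mem_append] at hv
    rcases hv with hv | hv
    · obtain ⟨M, B, hfs⟩ := append_of_mem hv
      refine ⟨s, [], M, B ++ L.flatMap fun s => s :: f s, by simp [hfs], fun w hw => ?_⟩
      exact hf s mem_cons_self w (by rw [hfs]; rcases mem_cons.mp hw with rfl | hw <;> simp [hw])
    · cases L with
      | nil => simp at hv
      | cons t L =>
        rw [isChain_cons_cons] at hL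
        rw [flatMap_cons, cons_append, mem_cons] at hv
        rcases hv with rfl | hv
        · refine ⟨s, [], f s, f v ++ L.flatMap fun s => s :: f s, by simp, ?_⟩
          rintro w (_ | ⟨_, hw⟩)
          exacts [hL.1, hf s mem_cons_self w hw]
        · obtain ⟨u, A, M, B, hAB, hR⟩ := hL.2.isCaterpillarOrder_flatMap
            (fun r hr => hf r (mem_cons_of_mem _ hr)) v (by simpa using hv)
          exact ⟨u, s :: f s ++ A, M, B, by rw [flatMap_cons, hAB]; simp, hR⟩

theorem Nodup.length_eq_card [Fintype α] {l : List α} (hnd : l.Nodup) (hmem : ∀ x, x ∈ l) :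
    l.length = Fintype.card α := by
  classical
  rw [← toFinset_card_of_nodup hnd, Finset.eq_univ_of_forall fun x => mem_toFinset.mpr (hmem x),
    Finset.card_univ]

variable [DecidableEq α]

theorem idxOf_filter_append_cons {p : α → Bool} {A B : List α} {x : α} (hx : x ∉ A)
    (hpx : p x) : ((A ++ x :: B).filter p).idxOf x = (A.filter p).length := by
  rw [filter_append, filter_cons_of_pos hpx,
    idxOf_append_of_notMem fun h => hx (mem_filter.mp h).1, idxOf_cons_self, add_zero]

theorem idxOf_stablePartition_append_cons (p : α → Bool) {A B : List α} {x : α}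
    (hx : x ∉ A) :
    ((A ++ x :: B).stablePartition p).idxOf x =
      if p x then (A.filter p).length
      else ((A ++ x :: B).filter p).length + (A.filter (!p ·)).length := by
  rw [stablePartition]
  split_ifs with hpx
  · rw [idxOf_append_of_mem (mem_filter.mpr ⟨by simp, hpx⟩), idxOf_filter_append_cons hx hpx]
  · rw [idxOf_append_of_notMem fun h => hpx (mem_filter.mp h).2,
      idxOf_filter_append_cons hx (by simpa using hpx)]

theorem idxOf_stablePartition_add_idxOf_stablePartition (p : α → Bool) {l A M B : List α}
    {u v : α} (hl : l = A ++ u :: (M ++ v :: B)) (hnd : l.Nodup)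
    (hp : ∀ w ∈ v :: M, p w = !p u) :
    (l.stablePartition p).idxOf u + (l.stablePartition p).idxOf v + 1 =
      (l.filter p).length + l.idxOf v := by
  have hsplit : l = (A ++ u :: M) ++ v :: B := by simp [hl]
  have hu : u ∉ A := fun h => (nodup_append.mp (hl ▸ hnd)).2.2 u h u mem_cons_self rfl
  have hv : v ∉ A ++ u :: M := fun h =>
    (nodup_append.mp (hsplit ▸ hnd)).2.2 v h v mem_cons_self rfl
  have hA := length_eq_length_filter_add (l := A) p
  have hM := length_eq_length_filter_add (l := M) p
  have hpM (w) (hw : w ∈ M) : p w = !p u := hp w (mem_cons_of_mem _ hw)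
  rw [hl, idxOf_stablePartition_append_cons p hu, ← hl, hsplit,
    idxOf_stablePartition_append_cons p hv, idxOf_append_of_notMem hv, idxOf_cons_self, ← hsplit,
    hp v mem_cons_self]
  cases hpu : p u
  · have : M.filter (!p ·) = [] := filter_eq_nil_iff.mpr fun w hw => by simp [hpM w hw, hpu]
    simp [filter_append, hpu, this] at hM ⊢
    omega
  · have : M.filter p = [] := filter_eq_nil_iff.mpr fun w hw => by simp [hpM w hw, hpu]
    simp [filter_append, hpu, this] at hM ⊢
    omega

end List

theorem SimpleGraph.IsTree.exists_isCordialLabeling_of_isCaterpillarOrder {V : Type} [Fintype V]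
    [DecidableEq V] (k : ℕ) {G : SimpleGraph V} [DecidableRel G.Adj] (hG : G.IsTree)
    {l : List V} (hnd : l.Nodup) (hmem : ∀ v, v ∈ l) (hl : l.IsCaterpillarOrder G.Adj) :
    ∃ f : V → ZMod k, IsCordialLabeling k G f := by
  let C := hG.coloringTwo
  let p (v : V) : Bool := C v = 0
  have hp {u w : V} (h : G.Adj u w) : p w = !p u := by
    have hfin : ∀ x y : Fin 2, x ≠ y → decide (y = 0) = !decide (x = 0) := by decide
    exact hfin _ _ (C.valid h)
  have hperm := l.stablePartition_perm p
  let g (v : V) : ℕ := (l.stablePartition p).idxOf v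
  let F := (l.filter p).length
  have hparent (v : V) : ∃ u, v ∈ l.tail → G.Adj u v ∧ g u + g v + 1 = F + l.idxOf v := by
    by_cases hv : v ∈ l.tail
    · obtain ⟨u, A, M, B, hAB, hR⟩ := hl v hv
      exact ⟨u, fun _ => ⟨hR v List.mem_cons_self,
        l.idxOf_stablePartition_add_idxOf_stablePartition p hAB hnd fun w hw => hp (hR w hw)⟩⟩
    · exact ⟨v, fun h => absurd h hv⟩
  choose parent hparent using hparent
  obtain ⟨a, tl, rfl⟩ :=
    List.exists_cons_of_ne_nil (List.ne_nil_of_mem (hmem hG.connected.nonempty.some))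
  have hsum (v : V) (hv : v ∈ tl) : edgeLabelSum g s(parent v, v) = F + tl.idxOf v := by
    have := (hparent v hv).2
    rw [List.idxOf_cons_ne _ (by rintro rfl; exact (List.nodup_cons.mp hnd).1 hv)] at this
    simp only [edgeLabelSum, Sym2.lift_mk]
    omega
  have hsum_inj : Set.InjOn (fun v => edgeLabelSum g s(parent v, v)) tl.toFinset := by
    intro v hv w hw h
    simp only [mem_coe, List.mem_toFinset] at hv hw h
    rw [hsum v hv, hsum w hw, add_right_inj] at h
    exact (List.idxOf_inj hv).mp h
  have hcard : #G.edgeFinset = tl.length := by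
    have := hG.card_edgeFinset
    rw [← hnd.length_eq_card hmem, List.length_cons] at this
    omega
  have hE : G.edgeFinset = tl.toFinset.image fun v => s(parent v, v) := by
    refine (eq_of_subset_of_card_le (fun e he => ?_) ?_).symm
    · obtain ⟨v, hv, rfl⟩ := mem_image.mp he
      exact SimpleGraph.mem_edgeFinset.mpr (hparent v (List.mem_toFinset.mp hv)).1
    · rw [card_image_of_injOn (fun v hv w hw h => hsum_inj hv hw (congrArg (edgeLabelSum g) h)),
        List.toFinset_card_of_nodup (List.nodup_cons.mp hnd).2, hcard]
  refine ⟨_, isCordialLabeling_natCast k G (g := g) (t := F)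
    (fun v w h => ?_) (fun v => ?_) ?_ ?_⟩
  · exact (List.idxOf_inj (hperm.mem_iff.mpr (hmem v))).mp h
  · rw [← hnd.length_eq_card hmem, ← hperm.length_eq]
    exact List.idxOf_lt_length_iff.mpr (hperm.mem_iff.mpr (hmem v))
  · rw [hE, coe_image]
    exact hsum_inj.image_of_comp
  · intro e he
    obtain ⟨v, hv, rfl⟩ := mem_image.mp (hE ▸ he)
    rw [List.mem_toFinset] at hv
    rw [hsum v hv, hcard, mem_Ico]
    exact ⟨Nat.le_add_right _ _, Nat.add_lt_add_left (List.idxOf_lt_length_iff.mpr hv) _⟩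

theorem SimpleGraph.Walk.IsPath.exists_isCaterpillarOrder {V : Type} [Fintype V] [DecidableEq V]
    {G : SimpleGraph V} (hG : G.Connected) {a b : V} {P : G.Walk a b} (hP : P.IsPath)
    (hdom : ∀ v, ∃ u ∈ P.support, G.dist v u ≤ 1) :
    ∃ l : List V, l.Nodup ∧ (∀ v, v ∈ l) ∧ l.IsCaterpillarOrder G.Adj := by
  choose anchor hanchor hdist using hdom
  let legs (s : V) : List V := ({w | w ∉ P.support ∧ anchor w = s} : Finset V).toList
  have mem_legs {s w : V} : w ∈ legs s ↔ w ∉ P.support ∧ anchor w = s := by simp [legs]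
  have adj_of_mem_legs {s w : V} (hw : w ∈ legs s) : G.Adj s w := by
    obtain ⟨hwP, rfl⟩ := mem_legs.mp hw
    have hne : w ≠ anchor w := fun h => hwP (h ▸ hanchor w)
    exact (dist_eq_one_iff_adj.mp (le_antisymm (hdist w) (hG.pos_dist_of_ne hne))).symm
  refine ⟨P.support.flatMap fun s => s :: legs s, List.nodup_flatMap.mpr ⟨fun s hs => ?_, ?_⟩,
    fun v => ?_, P.isChain_adj_support.isCaterpillarOrder_flatMap fun _ _ _ => adj_of_mem_legs⟩
  · exact List.nodup_cons.mpr ⟨fun h => (mem_legs.mp h).1 hs, nodup_toList _⟩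
  · refine hP.support_nodup.imp_of_mem fun hs ht hst x hxs hxt => ?_
    simp only [List.mem_cons, mem_legs] at hxs hxt
    rcases hxs with rfl | ⟨hx, rfl⟩ <;> rcases hxt with rfl | ⟨hx', rfl⟩
    exacts [hst rfl, hx' hs, hx ht, hst rfl]
  · by_cases hv : v ∈ P.support
    · exact List.mem_flatMap.mpr ⟨v, hv, List.mem_cons_self⟩
    · exact List.mem_flatMap.mpr
        ⟨anchor v, hanchor v, List.mem_cons_of_mem _ (mem_legs.mpr ⟨hv, rfl⟩)⟩

theorem caterpillar_is_cordial_general {V : Type} [Fintype V] [DecidableEq V] (k : ℕ)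
    (G : SimpleGraph V) [DecidableRel G.Adj] (hG : IsCaterpillar G) :
    ∃ f : V → ZMod k, IsCordialLabeling k G f := by
  obtain ⟨hT, a, b, P, hP, -, hdom⟩ := hG
  obtain ⟨l, hnd, hmem, hl⟩ := hP.exists_isCaterpillarOrder hT.connected hdom
  exact hT.exists_isCordialLabeling_of_isCaterpillarOrder k hnd hmem hl

/-- For every integer `k > 0`, every caterpillar is `k`-cordial. -/
theorem caterpillar_is_cordial {V : Type} [Fintype V] [DecidableEq V] (k : ℕ) (hk : 0 < k)
    (G : SimpleGraph V) [DecidableRel G.Adj] (hG : IsCaterpillar G) :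
    ∃ f : V → ZMod k, IsCordialLabeling k G f :=
  caterpillar_is_cordial_general k G hG
end

section
/- Let k be a positive integer and let T be a caterpillar with k + 1 vertices having a distinguished root vertex r (so T has k vertices not counting the root), such that r is at distance 1 from an endpoint of a maximum-length path P of T. Then T admits a labeling f of its vertices by ℤ/kℤ with f(r) = 0 such that each label appears on at most one more vertex than any other label and every edge-weight in ℤ/kℤ appears on exactly one edge. -/
open Finset

lemma Finset.card_filter_eq_one_of_injOn {α β : Type*} [DecidableEq β] {s : Finset α}
    {t : Finset β} {g : α → β} (hinj : Set.InjOn g s) (hmaps : Set.MapsTo g s t)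
    (hcard : #t ≤ #s) {b : β} (hb : b ∈ t) : #{x ∈ s | g x = b} = 1 := by
  obtain ⟨x, hx, rfl⟩ := surj_on_of_inj_on_of_card_le (fun x _ => g x) (fun x hx => hmaps hx)
    (fun x y hx hy h => hinj hx hy h) hcard b hb
  rw [card_eq_one]
  refine ⟨x, ext fun y => ?_⟩
  simp only [mem_filter, mem_singleton]
  exact ⟨fun ⟨hy, h⟩ => hinj hy hx h, by rintro rfl; exact ⟨hx, rfl⟩⟩

section RankIn
variable {V α : Type*} [LinearOrder α] {κ : V → α}

def rankIn (κ : V → α) (s : Finset V) (v : V) : ℕ := #{w ∈ s | κ w < κ v}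

lemma rankIn_lt_card {s : Finset V} {v : V} (hv : v ∈ s) : rankIn κ s v < #s :=
  card_lt_card (filter_ssubset.2 ⟨v, hv, lt_irrefl _⟩)

lemma rankIn_lt_rankIn {s : Finset V} {v w : V} (hv : v ∈ s) (h : κ v < κ w) :
    rankIn κ s v < rankIn κ s w := by
  refine card_lt_card ⟨fun x hx => ?_, fun hsub => ?_⟩
  · simp only [mem_filter] at hx ⊢
    exact ⟨hx.1, hx.2.trans h⟩
  · simpa using (mem_filter.1 (hsub (mem_filter.2 ⟨hv, h⟩))).2

lemma rankIn_injOn (hκ : Function.Injective κ) (s : Finset V) : Set.InjOn (rankIn κ s) s := by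
  intro v hv w hw h
  rcases lt_trichotomy (κ v) (κ w) with hlt | heq | hlt
  · exact absurd h (rankIn_lt_rankIn hv hlt).ne
  · exact hκ heq
  · exact absurd h (rankIn_lt_rankIn hw hlt).ne'

lemma card_filter_rankIn_eq (hκ : Function.Injective κ) (s : Finset V) (n : ℕ) :
    #{v ∈ s | rankIn κ s v = n} = if n < #s then 1 else 0 := by
  split_ifs with hn
  · exact card_filter_eq_one_of_injOn (rankIn_injOn hκ s)
      (fun _ hv => mem_range.2 (rankIn_lt_card hv)) (by simp) (mem_range.2 hn)
  · exact card_eq_zero.2 <| filter_eq_empty_iff.2 fun _ hv h => hn (h ▸ rankIn_lt_card hv)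

lemma card_filter_rankIn_add_eq (hκ : Function.Injective κ) (s : Finset V) (m n : ℕ) :
    #{v ∈ s | rankIn κ s v + m = n} = if m ≤ n ∧ n - m < #s then 1 else 0 := by
  by_cases hmn : m ≤ n
  · rw [filter_congr fun v _ => show rankIn κ s v + m = n ↔ rankIn κ s v = n - m by omega,
      card_filter_rankIn_eq hκ]
    simp [hmn]
  · rw [if_neg (by omega), card_eq_zero, filter_eq_empty_iff]
    omega

end RankIn

section RankLabel
variable {V α : Type*} [Fintype V] [LinearOrder α] {κ : V → α} {c : V → Bool} {r : V}

def classRank (κ : V → α) (c : V → Bool) (v : V) : ℕ := rankIn κ {w | c w = c v} v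

lemma classRank_add_classRank_add_one (hκ : Function.Injective κ) {u v : V} (huv : κ u < κ v)
    (hc : c u ≠ c v) (hbetween : ∀ w, κ u < κ w → κ w < κ v → c w = c v) :
    classRank κ c u + classRank κ c v + 1 = rankIn κ univ v := by
  classical
  have hsame : classRank κ c v = #{w ∈ {w | κ w < κ v} | c w = c v} := by
    simp only [classRank, rankIn, filter_filter, and_comm]
  have hother : ({w ∈ {w | κ w < κ v} | ¬c w = c v} : Finset V) =
      insert u {w ∈ ({w | c w = c u} : Finset V) | κ w < κ u} := by
    ext w
    simp only [mem_filter, mem_univ, true_and, mem_insert]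
    constructor
    · rintro ⟨hwv, hcw⟩
      rcases lt_trichotomy (κ u) (κ w) with h | h | h
      · exact absurd (hbetween w h hwv) hcw
      · exact Or.inl (hκ h).symm
      · exact Or.inr ⟨(Bool.eq_not_iff.2 hcw).trans (Bool.eq_not_iff.2 hc).symm, h⟩
    · rintro (rfl | ⟨hcw, hwu⟩)
      · exact ⟨huv, hc⟩
      · exact ⟨hwu.trans huv, hcw ▸ hc⟩
  have hu : u ∉ ({w ∈ {w | c w = c u} | κ w < κ u} : Finset V) := by simp
  rw [rankIn, ← card_filter_add_card_filter_not (p := fun w => c w = c v), ← hsame, hother,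
    card_insert_of_notMem hu, classRank, rankIn]
  ring

lemma classRank_eq_of_eq {b : Bool} {v : V} (hv : c v = b) :
    classRank κ c v = rankIn κ {w | c w = b} v := by
  rw [classRank, hv]

lemma classRank_eq_zero (hr : ∀ w, κ w < κ r → c w ≠ c r) : classRank κ c r = 0 :=
  card_eq_zero.2 <| filter_eq_empty_iff.2 fun w hw hlt => hr w hlt (mem_filter.1 hw).2

def rankLabel (κ : V → α) (c : V → Bool) (r v : V) : ℕ :=
  if c v = c r then classRank κ c v else classRank κ c v + (#{w | c w = c r} - 1)

lemma rankLabel_add_rankLabel_add_one (hκ : Function.Injective κ) {u v : V} (huv : κ u < κ v)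
    (hc : c u ≠ c v) (hbetween : ∀ w, κ u < κ w → κ w < κ v → c w = c v) :
    rankLabel κ c r u + rankLabel κ c r v + 1 = rankIn κ univ v + (#{w | c w = c r} - 1) := by
  have := classRank_add_classRank_add_one hκ huv hc hbetween
  unfold rankLabel
  split_ifs with hu hv hv
  · exact absurd (hu.trans hv.symm) hc
  · omega
  · omega
  · exact absurd ((Bool.eq_not_iff.2 hu).trans (Bool.eq_not_iff.2 hv).symm) hc

lemma card_filter_rankLabel_eq (n : ℕ) :
    #{v | rankLabel κ c r v = n} =
      #{v ∈ {w | c w = c r} | rankIn κ {w | c w = c r} v = n} +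
      #{v ∈ {w | c w = !c r} | rankIn κ {w | c w = !c r} v + (#{w | c w = c r} - 1) = n} := by
  rw [← card_filter_add_card_filter_not (p := fun v => c v = c r), filter_filter, filter_filter,
    filter_filter]
  congr 2 <;> ext v <;> simp only [mem_filter, mem_univ, true_and]
  · refine ⟨fun ⟨h, hv⟩ => ⟨hv, ?_⟩, fun ⟨hv, h⟩ => ⟨?_, hv⟩⟩ <;>
      rwa [rankLabel, if_pos hv, classRank_eq_of_eq hv] at *
  · rw [Bool.eq_not_iff]
    refine ⟨fun ⟨h, hv⟩ => ⟨hv, ?_⟩, fun ⟨hv, h⟩ => ⟨?_, hv⟩⟩ <;>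
      rwa [rankLabel, if_neg hv, classRank_eq_of_eq (Bool.eq_not_iff.2 hv)] at *

lemma card_filter_eq_add_card_filter_eq_not (c : V → Bool) (b : Bool) :
    #{w | c w = b} + #{w | c w = !b} = Fintype.card V := by
  simp_rw [Bool.eq_not_iff]
  exact card_filter_add_card_filter_not _

lemma rankLabel_add_one_lt (hne : ∃ w, c w ≠ c r) (v : V) :
    rankLabel κ c r v + 1 < Fintype.card V := by
  obtain ⟨w, hw⟩ := hne
  have hsum := card_filter_eq_add_card_filter_eq_not c (c r)
  have hr : 0 < #{w | c w = c r} := card_pos.2 ⟨r, by simp⟩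
  have hw : 0 < #{w | c w = !c r} := card_pos.2 ⟨w, by simpa [Bool.eq_not_iff] using hw⟩
  have hv : classRank κ c v < #{w | c w = c v} := rankIn_lt_card (by simp)
  unfold rankLabel
  split_ifs with h
  · rw [h] at hv; omega
  · rw [Bool.eq_not_iff.2 h] at hv; omega

lemma card_filter_rankLabel_mem_Icc (hκ : Function.Injective κ) {n : ℕ}
    (hn : n + 1 < Fintype.card V) : #{v | rankLabel κ c r v = n} ∈ Icc 1 2 := by
  have hsum := card_filter_eq_add_card_filter_eq_not c (c r)
  have hr : 0 < #{w | c w = c r} := card_pos.2 ⟨r, by simp⟩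
  rw [card_filter_rankLabel_eq, card_filter_rankIn_eq hκ, card_filter_rankIn_add_eq hκ, mem_Icc]
  split_ifs <;> omega

end RankLabel

section TreeEdges
variable {V β : Type*} [Fintype V] [DecidableEq V] [Fintype β] [DecidableEq β]
  {G : SimpleGraph V} [DecidableRel G.Adj]

lemma SimpleGraph.IsTree.card_filter_edgeFinset_eq_one (hT : G.IsTree)
    (hcard : Fintype.card β + 1 = Fintype.card V) {a : V} {par : V → V}
    (hadj : ∀ v ≠ a, G.Adj (par v) v) {φ : Sym2 V → β}
    (hinj : Set.InjOn (fun v => φ s(par v, v)) (univ.erase a)) (b : β) :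
    #{e ∈ G.edgeFinset | φ e = b} = 1 := by
  have hmaps : Set.MapsTo (fun v => s(par v, v)) (univ.erase a) G.edgeFinset := fun v hv => by
    simpa using hadj v (mem_erase.1 hv).1
  have hedge : Set.InjOn (fun v => s(par v, v)) (univ.erase a) :=
    fun v hv w hw h => hinj hv hw (congrArg φ h)
  have himage : (univ.erase a).image (fun v => s(par v, v)) = G.edgeFinset := by
    refine eq_of_subset_of_card_le (image_subset_iff.2 fun v hv => hmaps hv) ?_
    rw [card_image_of_injOn hedge, card_erase_of_mem (mem_univ a), card_univ]
    have := hT.card_edgeFinset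
    omega
  rw [← himage, filter_image, card_image_of_injOn (hedge.mono (filter_subset _ _))]
  refine card_filter_eq_one_of_injOn hinj (fun _ _ => mem_coe.2 (mem_univ _)) ?_ (mem_univ b)
  rw [card_univ, card_erase_of_mem (mem_univ a), card_univ]
  omega

end TreeEdges

section LevelOrder
variable {V : Type*} [DecidableEq V] {d : V → ℕ} {s : ℕ → V} {e : V → ℕ}

-- As `false < true`, the vertex `s i` comes last on level `i`.
def levelOrder (d : V → ℕ) (s : ℕ → V) (e : V → ℕ) (v : V) : ℕ ×ₗ Bool ×ₗ ℕ :=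
  toLex (d v, toLex (decide (s (d v) = v), e v))

lemma levelOrder_injective (he : Function.Injective e) :
    Function.Injective (levelOrder d s e) := fun _ _ h =>
  he (congrArg (fun x => (ofLex (ofLex x).2).2) h)

lemma le_of_levelOrder_lt {v w : V} (h : levelOrder d s e w < levelOrder d s e v) : d w ≤ d v :=
  (Prod.Lex.toLex_lt_toLex'.1 h).1

lemma levelOrder_lt_of_lt {v w : V} (h : d w < d v) : levelOrder d s e w < levelOrder d s e v :=
  Prod.Lex.toLex_lt_toLex.2 (Or.inl h)

lemma lt_of_levelOrder_lt {u w : V} (hu : s (d u) = u)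
    (h : levelOrder d s e u < levelOrder d s e w) : d u < d w := by
  rcases Prod.Lex.toLex_lt_toLex.1 h with h | ⟨hd, h⟩
  · exact h
  · simp only [hu, decide_true] at h
    rcases Prod.Lex.toLex_lt_toLex.1 h with h | ⟨hw, h⟩
    · exact absurd h (not_lt.2 le_top)
    · simp only at hd hw h
      have hsw : s (d w) = w := of_decide_eq_true hw.symm
      rw [← hd, hu] at hsw
      subst hsw
      exact absurd h (lt_irrefl _)

end LevelOrder

namespace SimpleGraph
variable {V : Type*} {G : SimpleGraph V}

lemma IsAcyclic.length_eq_dist (hG : G.IsAcyclic) {u v : V} {p : G.Walk u v} (hp : p.IsPath) :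
    p.length = G.dist u v := by
  obtain ⟨q, hq, hql⟩ := p.reachable.exists_path_of_dist
  rw [← hql, Subtype.mk.inj ((hG.subsingleton_path u v).elim ⟨p, hp⟩ ⟨q, hq⟩)]

variable {a b : V} {P : G.Walk a b}

lemma IsAcyclic.dist_getVert (hG : G.IsAcyclic) (hP : P.IsPath) {i : ℕ} (hi : i ≤ P.length) :
    G.dist a (P.getVert i) = i := by
  rw [← hG.length_eq_dist (hP.take i), Walk.take_length]
  omega

lemma IsAcyclic.getVert_dist_of_mem_support (hG : G.IsAcyclic) (hP : P.IsPath) {v : V}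
    (hv : v ∈ P.support) : G.dist a v ≤ P.length ∧ P.getVert (G.dist a v) = v := by
  obtain ⟨n, rfl, hn⟩ := Walk.mem_support_iff_exists_getVert.1 hv
  rw [hG.dist_getVert hP hn]
  exact ⟨hn, rfl⟩

lemma IsAcyclic.mem_support_of_adj_of_dist_eq_add_one (hG : G.IsAcyclic)
    (hP : P.IsPath) {u v : V} (hu : u ∈ P.support) (hadj : G.Adj u v)
    (hd : G.dist a u = G.dist a v + 1) : v ∈ P.support := by
  classical
  obtain ⟨Q, hQ, hQl⟩ :=
    ((P.takeUntil u hu).reachable.trans hadj.reachable).exists_path_of_dist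
  have huQ : u ∉ Q.support := fun h => by
    have := (dist_le (Q.takeUntil u h)).trans (Q.length_takeUntil_le_length h)
    omega
  exact P.support_takeUntil_subset_support hu
    (hG.mem_support_of_ne_mem_support_of_adj_of_isPath (hP.takeUntil hu) hQ hadj huQ)

lemma mem_support_of_adj_start_of_longest (hP : P.IsPath)
    (hmax : ∀ (c d : V) (Q : G.Walk c d), Q.IsPath → Q.length ≤ P.length) {v : V}
    (hadj : G.Adj a v) : v ∈ P.support := by
  by_contra hv
  have := hmax _ _ _ (hP.cons hv (h := hadj.symm))
  simp at this

lemma mem_support_of_adj_end_of_longest (hP : P.IsPath)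
    (hmax : ∀ (c d : V) (Q : G.Walk c d), Q.IsPath → Q.length ≤ P.length) {v : V}
    (hadj : G.Adj b v) : v ∈ P.support := by
  by_contra hv
  have := hmax _ _ _ (hP.concat hv hadj)
  simp at this

lemma IsTree.adj_getVert_dist_sub_one (hT : G.IsTree) (hP : P.IsPath)
    (hmax : ∀ (c d : V) (Q : G.Walk c d), Q.IsPath → Q.length ≤ P.length)
    (hcov : ∀ v, ∃ u ∈ P.support, G.dist v u ≤ 1) {v : V} (hv : v ≠ a) :
    G.dist a v ≤ P.length ∧ G.Adj (P.getVert (G.dist a v - 1)) v := by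
  have hpos := hT.connected.pos_dist_of_ne hv.symm
  by_cases hvP : v ∈ P.support
  · obtain ⟨hle, hget⟩ := hT.isAcyclic.getVert_dist_of_mem_support hP hvP
    have := P.adj_getVert_succ (i := G.dist a v - 1) (by omega)
    rw [Nat.sub_add_cancel hpos, hget] at this
    exact ⟨hle, this⟩
  obtain ⟨u, hu, hvu⟩ := hcov v
  have hadj : G.Adj u v := by
    have := hT.connected.pos_dist_of_ne (fun h : v = u => hvP (h ▸ hu))
    exact (dist_eq_one_iff_adj.1 (by omega)).symm
  obtain ⟨hule, hget⟩ := hT.isAcyclic.getVert_dist_of_mem_support hP hu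
  rcases hT.dist_eq_dist_add_one_of_adj a hadj with hd | hd
  · exact absurd (hT.isAcyclic.mem_support_of_adj_of_dist_eq_add_one hP hu hadj hd) hvP
  · have hub : G.dist a u ≠ P.length := fun h => hvP <|
      mem_support_of_adj_end_of_longest hP hmax (by rwa [← P.getVert_length, ← h, hget])
    rw [hd, Nat.add_sub_cancel, hget]
    exact ⟨by omega, hadj⟩

end SimpleGraph

section Labeling
variable {V α : Type} [Fintype V] [LinearOrder α] {κ : V → α} {c : V → Bool}
  {r : V} {k : ℕ}

def IsBalancedEdgeBijective [DecidableEq V] (G : SimpleGraph V) [DecidableRel G.Adj]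
    (f : V → ZMod k) : Prop :=
  (∀ a b : ZMod k, (#{v | f v = a} : ℤ) - #{v | f v = b} ≤ 1) ∧
  ∀ w : ZMod k, #{e ∈ G.edgeFinset | edgeWeight k f e = w} = 1

lemma natCast_eq_iff_eq_val [NeZero k] {n : ℕ} (hn : n < k) (ℓ : ZMod k) :
    (n : ZMod k) = ℓ ↔ n = ℓ.val := by
  constructor
  · rintro rfl; rw [ZMod.val_cast_of_lt hn]
  · rintro rfl; exact ZMod.natCast_zmod_val ℓ

lemma card_filter_natCast_rankLabel_mem_Icc [NeZero k] (hκ : Function.Injective κ)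
    (hcard : Fintype.card V = k + 1) (hne : ∃ w, c w ≠ c r) (ℓ : ZMod k) :
    #{v | (rankLabel κ c r v : ZMod k) = ℓ} ∈ Icc 1 2 := by
  have hlt : ∀ v, rankLabel κ c r v < k := fun v => by
    have := rankLabel_add_one_lt (κ := κ) hne v; omega
  simp_rw [natCast_eq_iff_eq_val (hlt _)]
  exact card_filter_rankLabel_mem_Icc hκ (by have := ℓ.val_lt; omega)

lemma edgeWeight_rankLabel (hκ : Function.Injective κ) {u v : V} (huv : κ u < κ v)
    (hc : c u ≠ c v) (hbetween : ∀ w, κ u < κ w → κ w < κ v → c w = c v) :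
    edgeWeight k (fun v => (rankLabel κ c r v : ZMod k)) s(u, v) =
      ((rankIn κ univ v - 1 : ℕ) : ZMod k) + ((#{w | c w = c r} - 1 : ℕ) : ZMod k) := by
  have := rankLabel_add_rankLabel_add_one (r := r) hκ huv hc hbetween
  have := rankIn_lt_rankIn (mem_univ u) huv
  simp only [edgeWeight, Sym2.lift_mk, ← Nat.cast_add]
  congr 1
  omega

theorem exists_isBalancedEdgeBijective_of_parent_order [DecidableEq V] (hk : 0 < k)
    {G : SimpleGraph V} [DecidableRel G.Adj] (hT : G.IsTree) (hcard : Fintype.card V = k + 1)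
    (hκ : Function.Injective κ) {a : V} {par : V → V} (hadj : ∀ v ≠ a, G.Adj (par v) v)
    (hlt : ∀ v ≠ a, κ (par v) < κ v) (hc : ∀ v ≠ a, c (par v) ≠ c v)
    (hbetween : ∀ v ≠ a, ∀ w, κ (par v) < κ w → κ w < κ v → c w = c v)
    (hr : ∀ w, κ w < κ r → c w ≠ c r) :
    ∃ f : V → ZMod k, f r = 0 ∧ IsBalancedEdgeBijective G f := by
  have : NeZero k := ⟨hk.ne'⟩
  have hne : ∃ w, c w ≠ c r := by
    obtain ⟨v, hv⟩ := Fintype.exists_ne_of_one_lt_card (by omega) a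
    by_cases h : c v = c r
    · exact ⟨par v, h ▸ hc v hv⟩
    · exact ⟨v, h⟩
  have hcount := card_filter_natCast_rankLabel_mem_Icc hκ hcard hne
  refine ⟨fun v => rankLabel κ c r v, by simp [rankLabel, classRank_eq_zero hr],
    fun ℓ ℓ' => ?_, hT.card_filter_edgeFinset_eq_one (by simp [hcard]) hadj ?_⟩
  · dsimp only
    have := mem_Icc.1 (hcount ℓ)
    have := mem_Icc.1 (hcount ℓ')
    omega
  · intro v hv w hw h
    have hv := (mem_erase.1 hv).1
    have hw := (mem_erase.1 hw).1
    have hrank : ∀ u ≠ a, rankIn κ univ u - 1 < k := fun u hu => by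
      have := rankIn_lt_card (κ := κ) (mem_univ u)
      rw [card_univ] at this
      omega
    simp only [edgeWeight_rankLabel hκ (hlt _ hv) (hc _ hv) (hbetween _ hv),
      edgeWeight_rankLabel hκ (hlt _ hw) (hc _ hw) (hbetween _ hw), add_left_inj,
      natCast_eq_iff_eq_val (hrank v hv), ZMod.val_cast_of_lt (hrank w hw)] at h
    have := rankIn_lt_rankIn (mem_univ _) (hlt v hv)
    have := rankIn_lt_rankIn (mem_univ _) (hlt w hw)
    exact rankIn_injOn hκ univ (mem_coe.2 (mem_univ v)) (mem_coe.2 (mem_univ w)) (by omega)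

end Labeling

theorem SimpleGraph.IsTree.exists_isBalancedEdgeBijective_of_caterpillar {V : Type} [Fintype V]
    [DecidableEq V] {k : ℕ} (hk : 0 < k) {G : SimpleGraph V} [DecidableRel G.Adj] (hT : G.IsTree)
    (hcard : Fintype.card V = k + 1) {a b r : V} {P : G.Walk a b} (hP : P.IsPath)
    (hmax : ∀ (c d : V) (Q : G.Walk c d), Q.IsPath → Q.length ≤ P.length)
    (hcov : ∀ v : V, ∃ u ∈ P.support, G.dist v u ≤ 1) (hra : G.dist r a = 1) :
    ∃ f : V → ZMod k, f r = 0 ∧ IsBalancedEdgeBijective G f := by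
  have hspine : ∀ i ≤ P.length, G.dist a (P.getVert i) = i :=
    fun i => hT.isAcyclic.dist_getVert hP
  have hparent := fun v (hv : v ≠ a) => hT.adj_getVert_dist_sub_one hP hmax hcov hv
  have hdpos : ∀ v ≠ a, 0 < G.dist a v := fun v hv => hT.connected.pos_dist_of_ne hv.symm
  have hlevel_one : ∀ w, G.dist a w = 1 → w = P.getVert 1 := fun w hw => by
    have hw' := (hT.isAcyclic.getVert_dist_of_mem_support hP
      (mem_support_of_adj_start_of_longest hP hmax (dist_eq_one_iff_adj.1 hw))).2
    rwa [hw, eq_comm] at hw'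
  have hdr : G.dist a r = 1 := by rwa [dist_comm]
  have hpar_level : ∀ v ≠ a, G.dist a (P.getVert (G.dist a v - 1)) = G.dist a v - 1 :=
    fun v hv => hspine _ (by have := (hparent v hv).1; omega)
  refine exists_isBalancedEdgeBijective_of_parent_order hk hT hcard
    (levelOrder_injective (d := G.dist a) (s := P.getVert)
      (Fin.val_injective.comp (Fintype.equivFin V).injective))
    (c := fun v => (G.dist a v).bodd) (fun v hv => (hparent v hv).2) (fun v hv => ?_)
    (fun v hv => ?_) (fun v hv w hpw hwv => ?_) (fun w hw => ?_)
  · exact levelOrder_lt_of_lt (by rw [hpar_level v hv]; have := hdpos v hv; omega)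
  · simp only [hpar_level v hv]
    obtain ⟨n, hn⟩ := Nat.exists_eq_add_of_lt (hdpos v hv)
    simp [hn]
  · have h1 := lt_of_levelOrder_lt (by rw [hpar_level v hv]) hpw
    have h2 := le_of_levelOrder_lt hwv
    rw [hpar_level v hv] at h1
    simp only [show G.dist a w = G.dist a v by omega]
  · have := le_of_levelOrder_lt hw
    obtain hw0 | hw1 : G.dist a w = 0 ∨ G.dist a w = 1 := by omega
    · simp [hw0, hdr]
    · rw [hlevel_one w hw1, ← hlevel_one r hdr] at hw
      exact absurd hw (lt_irrefl _)

/-- If `T` is a rooted caterpillar with `k` vertices (not counting the root `r`),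
whose root `r` is at distance 1 from an endpoint of a maximum-length path `P`
witnessing the caterpillar property, then `T` admits a labeling by `ZMod k` with the
root labeled `0`, in which each label appears on at most one more vertex than any
other label and every weight appears on exactly one edge. -/
theorem rooted_caterpillar_labeling {V : Type} [Fintype V] [DecidableEq V] (k : ℕ)
    (hk : 0 < k) (G : SimpleGraph V) [DecidableRel G.Adj] (r : V)
    (hcard : Fintype.card V = k + 1)
    (hT : G.IsTree)
    (hcat : ∃ (a b : V) (P : G.Walk a b), P.IsPath ∧
      (∀ (c d : V) (Q : G.Walk c d), Q.IsPath → Q.length ≤ P.length) ∧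
      (∀ v : V, ∃ u ∈ P.support, G.dist v u ≤ 1) ∧
      (G.dist r a = 1 ∨ G.dist r b = 1)) :
    ∃ f : V → ZMod k, f r = 0 ∧
      (∀ a b : ZMod k,
        ((Finset.univ.filter (fun v => f v = a)).card : ℤ) -
          ((Finset.univ.filter (fun v => f v = b)).card : ℤ) ≤ 1) ∧
      (∀ w : ZMod k,
        (G.edgeFinset.filter (fun e => edgeWeight k f e = w)).card = 1) := by
  obtain ⟨a, b, P, hP, hmax, hcov, hra | hrb⟩ := hcat
  · exact hT.exists_isBalancedEdgeBijective_of_caterpillar hk hcard hP hmax hcov hra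
  · refine hT.exists_isBalancedEdgeBijective_of_caterpillar hk hcard hP.reverse
      (fun c d Q hQ => ?_) (fun v => ?_) hrb
    · rw [SimpleGraph.Walk.length_reverse]
      exact hmax c d Q hQ
    · simpa using hcov v
end

section
/- Let k > 0 and m be positive integers. If every tree on mk vertices is k-cordial, then every tree T with mk ≤ |V(T)| ≤ mk + ⌊k/2⌋ + 1 is k-cordial. -/
/-! Induction on the number of vertices, starting from `m * k`: a tree on `n + 1` vertices
arises from one on `n` vertices by attaching a leaf `v` to a vertex `u`. Give `v` a label `c`
that is currently least frequent and such that the new edge weight `c + f u` is currently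
least frequent; both count vectors then stay balanced. A balanced count vector on `ZMod k`
with total `s` has exactly `s % k` labels that are not least frequent, so such a `c` exists as
long as `n % k + (n - 1) % k < k`, which holds precisely while `n % k ≤ k / 2`. -/

open Finset SimpleGraph

section Balanced

variable {α : Type*} {c d : α → ℕ}

theorem card_filter_exists_lt_eq_sum_mod [Fintype α] (hc : ∀ a b, (c a : ℤ) - c b ≤ 1) :
    #{a | ∃ b, c b < c a} = (∑ a, c a) % Fintype.card α := by
  cases isEmpty_or_nonempty α
  · simp
  obtain ⟨a₀, -, hmin⟩ := exists_min_image univ c univ_nonempty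
  have hsum : ∑ a, c a = Fintype.card α * c a₀ + #{a | ∃ b, c b < c a} := by
    rw [card_filter, ← smul_eq_mul, ← card_univ, ← sum_const, ← sum_add_distrib]
    refine sum_congr rfl fun a _ => ?_
    have := hc a a₀
    have := hmin a (mem_univ a)
    split_ifs with h
    · obtain ⟨b, hb⟩ := h
      have := hmin b (mem_univ b)
      omega
    · have := not_exists.mp h a₀
      omega
  have hlt : #{a | ∃ b, c b < c a} < Fintype.card α :=
    card_lt_univ_of_notMem (x := a₀) (by simpa using hmin)
  rw [hsum, Nat.mul_add_mod, Nat.mod_eq_of_lt hlt]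

theorem exists_forall_le_and_forall_le [Fintype α] (hc : ∀ a b, (c a : ℤ) - c b ≤ 1)
    (hd : ∀ a b, (d a : ℤ) - d b ≤ 1)
    (hsum : (∑ a, c a) % Fintype.card α + (∑ a, d a) % Fintype.card α < Fintype.card α) :
    ∃ a, (∀ b, c a ≤ c b) ∧ ∀ b, d a ≤ d b := by
  classical
  rw [← card_filter_exists_lt_eq_sum_mod hc, ← card_filter_exists_lt_eq_sum_mod hd] at hsum
  obtain ⟨a, -, ha⟩ := exists_mem_notMem_of_card_lt_card
    (hsum.trans_le' (card_union_le _ _) : _ < #(univ : Finset α))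
  simp only [mem_union, mem_filter, mem_univ, true_and, not_or, not_exists, not_lt] at ha
  exact ⟨a, ha⟩

theorem add_ite_sub_add_ite_le_one [DecidableEq α] (hc : ∀ a b, (c a : ℤ) - c b ≤ 1) {a₀ : α}
    (ha₀ : ∀ b, c a₀ ≤ c b) (a b : α) :
    ((c a + if a₀ = a then 1 else 0 : ℕ) : ℤ) - (c b + if a₀ = b then 1 else 0 : ℕ) ≤ 1 := by
  have := hc a b
  have := ha₀ b
  split_ifs <;> subst_vars <;> omega

end Balanced

theorem Nat.mod_add_sub_one_mod_lt {n k : ℕ} (hn : 0 < n) (hk : 0 < k) (h : n % k ≤ k / 2) :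
    n % k + (n - 1) % k < k := by
  have hsucc : ((n - 1) % k + 1) % k = n % k := by
    rw [Nat.mod_add_mod, Nat.sub_add_cancel hn]
  have := Nat.mod_lt (n - 1) hk
  rcases Nat.lt_or_ge ((n - 1) % k + 1) k with hlt | hge
  · rw [Nat.mod_eq_of_lt hlt] at hsucc
    omega
  · rw [show (n - 1) % k + 1 = k by omega, Nat.mod_self] at hsucc
    omega

theorem Finset.card_filter_eq_card_filter_erase_add {α : Type*} [DecidableEq α] {s : Finset α}
    (p : α → Prop) [DecidablePred p] {x : α} (hx : x ∈ s) :
    #(s.filter p) = #((s.erase x).filter p) + if p x then 1 else 0 := by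
  rw [filter_erase]
  split_ifs with h
  · exact (card_erase_add_one (mem_filter.mpr ⟨hx, h⟩)).symm
  · rw [erase_eq_of_notMem fun h' => h (mem_filter.mp h').2, add_zero]

section Leaf

variable {V : Type} [Fintype V] [DecidableEq V]

theorem card_filter_eq_card_filter_compl_singleton_add {β : Type*} [DecidableEq β] (f : V → β)
    (v : V) (b : β) :
    #{w | f w = b} = #{w : ({v}ᶜ : Set V) | f w = b} + if f v = b then 1 else 0 := by
  simp only [card_filter]
  rw [Fintype.sum_eq_add_sum_subtype_ne _ v, add_comm]
  rfl

variable {G : SimpleGraph V} [DecidableRel G.Adj] {v u : V}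

theorem edgeFinset_inter_sym2_compl_singleton (hu : ∀ w, G.Adj v w ↔ w = u) :
    G.edgeFinset ∩ ({v}ᶜ : Set V).toFinset.sym2 = G.edgeFinset.erase s(v, u) := by
  ext e
  induction e using Sym2.ind
  simp only [mem_inter, mem_edgeFinset, mem_edgeSet, mem_sym2_iff, Sym2.mem_iff,
    Set.mem_toFinset, Set.mem_compl_singleton_iff, mem_erase, ne_eq, Sym2.eq_iff]
  grind [G.adj_comm]

theorem card_filter_edgeWeight_eq_induce_compl_singleton_add {k : ℕ}
    (hu : ∀ w, G.Adj v w ↔ w = u) (f : V → ZMod k) (a : ZMod k) :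
    #{e ∈ G.edgeFinset | edgeWeight k f e = a} =
      #{e ∈ (G.induce {v}ᶜ).edgeFinset | edgeWeight k (fun w : ({v}ᶜ : Set V) => f w) e = a} +
        if f v + f u = a then 1 else 0 := by
  have hvu : s(v, u) ∈ G.edgeFinset := by simpa using (hu u).mpr rfl
  rw [card_filter_eq_card_filter_erase_add _ hvu, ← edgeFinset_inter_sym2_compl_singleton hu,
    ← map_edgeFinset_induce, filter_map, card_map]
  congr 2
  refine filter_congr fun e _ => ?_
  induction e using Sym2.ind
  rfl

theorem IsCordialLabeling.exists_extend_leaf {k : ℕ} [NeZero k] (hu : ∀ w, G.Adj v w ↔ w = u)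
    {f' : ({v}ᶜ : Set V) → ZMod k} (hf' : IsCordialLabeling k (G.induce {v}ᶜ) f')
    (hcard : Fintype.card ({v}ᶜ : Set V) % k + #(G.induce {v}ᶜ).edgeFinset % k < k) :
    ∃ f : V → ZMod k, IsCordialLabeling k G f := by
  have hvu : u ≠ v := ((hu u).mpr rfl).ne'
  set t := f' ⟨u, hvu⟩
  have hsumV : ∑ a, #{w | f' w = a} = Fintype.card ({v}ᶜ : Set V) :=
    (card_eq_sum_card_fiberwise fun w _ => mem_univ (f' w)).symm
  have hsumE : ∑ a, #{e ∈ (G.induce {v}ᶜ).edgeFinset | edgeWeight k f' e = a + t} =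
      #(G.induce {v}ᶜ).edgeFinset :=
    (Equiv.sum_comp (Equiv.addRight t) _).trans
      (card_eq_sum_card_fiberwise fun e _ => mem_univ (edgeWeight k f' e)).symm
  obtain ⟨c, hcV, hcE⟩ := exists_forall_le_and_forall_le hf'.1
    (fun a b => hf'.2 (a + t) (b + t)) (by rwa [hsumV, hsumE, ZMod.card])
  let f : V → ZMod k := fun w => if h : w = v then c else f' ⟨w, h⟩
  have hrestrict : ∀ w : ({v}ᶜ : Set V), f w = f' w := fun w => dif_neg w.2
  have hfv : f v = c := dif_pos rfl
  have hfu : f u = t := dif_neg hvu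
  refine ⟨f, fun a b => ?_, fun a b => ?_⟩
  · rw [card_filter_eq_card_filter_compl_singleton_add f v a,
      card_filter_eq_card_filter_compl_singleton_add f v b]
    simp only [hrestrict, hfv]
    exact add_ite_sub_add_ite_le_one hf'.1 hcV a b
  · rw [card_filter_edgeWeight_eq_induce_compl_singleton_add hu f a,
      card_filter_edgeWeight_eq_induce_compl_singleton_add hu f b, funext hrestrict, hfv, hfu]
    refine add_ite_sub_add_ite_le_one hf'.2 (fun b => ?_) a b
    simpa using hcE (b - t)

theorem SimpleGraph.IsTree.exists_isCordialLabeling_of_forall_card_eq_pred {k : ℕ} [NeZero k]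
    (hG : G.IsTree) (hV : 2 ≤ Fintype.card V) (hmod : (Fintype.card V - 1) % k ≤ k / 2)
    (ih : ∀ (W : Type) [Fintype W] [DecidableEq W] (T : SimpleGraph W) [DecidableRel T.Adj],
      T.IsTree → Fintype.card W = Fintype.card V - 1 → ∃ f : W → ZMod k, IsCordialLabeling k T f) :
    ∃ f : V → ZMod k, IsCordialLabeling k G f := by
  have : Nontrivial V := Fintype.one_lt_card_iff_nontrivial.mp hV
  obtain ⟨v, hv⟩ := hG.exists_vert_degree_one_of_nontrivial
  obtain ⟨u, hvu, huniq⟩ := degree_eq_one_iff_existsUnique_adj.mp hv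
  have hT : (G.induce {v}ᶜ).IsTree :=
    ⟨hG.connected.induce_compl_singleton_of_degree_eq_one hv, hG.isAcyclic.induce _⟩
  have hcard : Fintype.card ({v}ᶜ : Set V) = Fintype.card V - 1 := by
    rw [Fintype.card_compl_set, Set.card_singleton]
  obtain ⟨f', hf'⟩ := ih _ _ hT hcard
  refine hf'.exists_extend_leaf (fun w => ⟨huniq w, fun h => h ▸ hvu⟩) ?_
  have hedges : #(G.induce {v}ᶜ).edgeFinset = Fintype.card V - 1 - 1 := by
    have := hT.card_edgeFinset
    omega
  rw [hcard, hedges]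
  exact Nat.mod_add_sub_one_mod_lt (by omega) (NeZero.pos k) hmod

end Leaf

/-- Hovey's lemma: for positive integers `k` and `m`, if every tree on `m * k`
vertices is `k`-cordial, then every tree `T` with
`m * k ≤ |V(T)| ≤ m * k + ⌊k / 2⌋ + 1` is `k`-cordial. -/
theorem hovey_lemma (k m : ℕ) (hk : 0 < k) (hm : 0 < m)
    (H : ∀ (V : Type) [Fintype V] [DecidableEq V]
        (G : SimpleGraph V) [DecidableRel G.Adj],
      G.IsTree → Fintype.card V = m * k → ∃ f : V → ZMod k, IsCordialLabeling k G f) :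
    ∀ (V : Type) [Fintype V] [DecidableEq V]
        (G : SimpleGraph V) [DecidableRel G.Adj],
      G.IsTree → m * k ≤ Fintype.card V → Fintype.card V ≤ m * k + k / 2 + 1 →
      ∃ f : V → ZMod k, IsCordialLabeling k G f := by
  have : NeZero k := ⟨hk.ne'⟩
  suffices ∀ n, m * k ≤ n → n ≤ m * k + k / 2 + 1 →
      ∀ (V : Type) [Fintype V] [DecidableEq V] (G : SimpleGraph V) [DecidableRel G.Adj],
        G.IsTree → Fintype.card V = n → ∃ f : V → ZMod k, IsCordialLabeling k G f from
    fun V _ _ G _ hG hlo hhi => this _ hlo hhi V G hG rfl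
  intro n hlo
  induction n, hlo using Nat.le_induction with
  | base => exact fun _ => H
  | succ n hmn ih =>
    intro hn V _ _ G _ hG hV
    obtain ⟨j, rfl⟩ := Nat.exists_eq_add_of_le hmn
    have hmod : (m * k + j) % k ≤ k / 2 := by
      rw [Nat.mul_comm, Nat.mul_add_mod]
      exact (Nat.mod_le j k).trans (by omega)
    have hmk := Nat.mul_pos hm hk
    refine hG.exists_isCordialLabeling_of_forall_card_eq_pred (by omega) (by rwa [hV]) ?_
    exact fun W _ _ T _ hT hW => ih (by omega) W T hT (by omega)
end

section
/- Every tree on at most seven vertices is 7-cordial. -/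
/-!
A tree on at most seven vertices has at most six edges, so a labeling into `ZMod 7` is cordial
as soon as it is injective on vertices and on edge weights. List the vertices so that each one
after the first is adjacent to an earlier one, its parent; counting edges shows that the parent
edges are all the edges of the tree. After padding to seven vertices, the tree is thus encoded by
a parent function on `{1, …, 6}` with `p i < i`, and for each of the `6! = 720` such functions a
labeling with distinct vertex labels and distinct edge weights was found by computer search and
is checked here by evaluation.
-/

open Function Set

theorem card_filter_sub_card_filter_le_one_of_injOn {α β : Type} [DecidableEq β]
    {s : Finset α} {g : α → β} (hg : InjOn g s) (a b : β) :
    ((s.filter (g · = a)).card : ℤ) - (s.filter (g · = b)).card ≤ 1 := by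
  have : (s.filter (g · = a)).card ≤ 1 := Finset.card_le_one.2 fun x hx y hy => by
    simp only [Finset.mem_filter] at hx hy
    exact hg hx.1 hy.1 (hx.2.trans hy.2.symm)
  omega

theorem isCordialLabeling_of_injective {V : Type} [Fintype V] [DecidableEq V] {k : ℕ}
    (G : SimpleGraph V) [DecidableRel G.Adj] {f : V → ZMod k} (hf : Injective f)
    (hw : InjOn (edgeWeight k f) G.edgeSet) : IsCordialLabeling k G f :=
  ⟨card_filter_sub_card_filter_le_one_of_injOn hf.injOn,
    card_filter_sub_card_filter_le_one_of_injOn (by rwa [SimpleGraph.coe_edgeFinset])⟩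

namespace SimpleGraph

variable {V : Type} [Fintype V] {G : SimpleGraph V} {v : ℕ → V} {p : ℕ → ℕ}

structure IsParentEnumeration (G : SimpleGraph V) (v : ℕ → V) (p : ℕ → ℕ) : Prop where
  bijOn : BijOn v (Iio (Fintype.card V)) univ
  parent_lt : ∀ i, 0 < i → p i < i
  adj_parent : ∀ i, 0 < i → i < Fintype.card V → G.Adj (v i) (v (p i))

theorem Preconnected.exists_injOn_adj_parent (hG : G.Preconnected) (x : V) (m : ℕ) (hm : 0 < m)
    (hmV : m ≤ Fintype.card V) : ∃ (v : ℕ → V) (p : ℕ → ℕ), InjOn v (Iio m) ∧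
      (∀ i, 0 < i → p i < i) ∧ ∀ i, 0 < i → i < m → G.Adj (v i) (v (p i)) := by
  classical
  induction m, hm using Nat.le_induction with
  | base => exact ⟨fun _ => x, fun _ => 0, by simp [InjOn], fun _ hi => hi, by omega⟩
  | succ m hm ih =>
    obtain ⟨v, p, hinj, hlt, hadj⟩ := ih (by omega)
    have hnot : ∃ y, y ∉ v '' Iio m := by
      by_contra! hall
      have : (Finset.univ : Finset V) ⊆ (Finset.range m).image v := fun y _ => by
        simpa using hall y
      have := (Finset.card_le_card this).trans Finset.card_image_le
      simp only [Finset.card_univ, Finset.card_range] at this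
      omega
    obtain ⟨y, hy⟩ := hnot
    obtain ⟨d, -, ⟨j, hj, hjd⟩, hd⟩ :=
      (hG (v 0) y).some.exists_boundary_dart _ (mem_image_of_mem v (show 0 < m by omega)) hy
    refine ⟨update v m d.snd, update p m j, ?_, ?_, ?_⟩
    · have hsnd : ∀ i < m, v i ≠ d.snd := fun i hi h => hd ⟨i, hi, h⟩
      intro a ha b hb hab
      simp only [mem_Iio, update_apply] at ha hb hab
      split_ifs at hab with h1 h2 h2
      · omega
      · exact absurd hab.symm (hsnd b (by omega))
      · exact absurd hab (hsnd a (by omega))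
      · exact hinj (show a < m by omega) (show b < m by omega) hab
    · intro i hi
      rcases eq_or_ne i m with rfl | him
      · simpa using hj
      · simpa [him] using hlt i hi
    · intro i hi him
      rcases eq_or_ne i m with rfl | him'
      · simpa [(show j < i from hj).ne, hjd] using d.adj.symm
      · have := hlt i hi
        simpa [him', show p i ≠ m by omega] using hadj i hi (by omega)

theorem Preconnected.exists_isParentEnumeration [Nonempty V] (hG : G.Preconnected) :
    ∃ v p, G.IsParentEnumeration v p := by
  classical
  obtain ⟨v, p, hinj, hlt, hadj⟩ :=
    hG.exists_injOn_adj_parent (Classical.arbitrary V) _ Fintype.card_pos le_rfl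
  have hsurj : SurjOn v (Finset.range (Fintype.card V)) (Finset.univ : Finset V) :=
    Finset.surjOn_of_injOn_of_card_le v (fun _ _ => Finset.mem_univ _)
      (by rwa [Finset.coe_range]) (by simp)
  rw [Finset.coe_range, Finset.coe_univ] at hsurj
  exact ⟨v, p, ⟨mapsTo_univ _ _, hinj, hsurj⟩, hlt, hadj⟩

namespace IsParentEnumeration

theorem invFunOn_lt (h : G.IsParentEnumeration v p) (u : V) :
    invFunOn v (Iio (Fintype.card V)) u < Fintype.card V :=
  invFunOn_mem (h.bijOn.surjOn (mem_univ u))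

theorem apply_invFunOn (h : G.IsParentEnumeration v p) (u : V) :
    v (invFunOn v (Iio (Fintype.card V)) u) = u :=
  invFunOn_eq (h.bijOn.surjOn (mem_univ u))

theorem invFunOn_apply (h : G.IsParentEnumeration v p) {i : ℕ} (hi : i < Fintype.card V) :
    invFunOn v (Iio (Fintype.card V)) (v i) = i :=
  h.bijOn.invOn_invFunOn.1 hi

theorem exists_eq_parent_edge (h : G.IsParentEnumeration v p) (hT : G.IsTree) {e : Sym2 V}
    (he : e ∈ G.edgeSet) : ∃ i ∈ Ioo 0 (Fintype.card V), s(v i, v (p i)) = e := by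
  classical
  set n := Fintype.card V
  let g : ℕ → Sym2 V := fun i => s(v i, v (p i))
  have hg : InjOn g (Finset.Ioo 0 n) := by
    intro i hi j hj hij
    simp only [Finset.coe_Ioo, mem_Ioo] at hi hj
    have := h.parent_lt i hi.1
    have := h.parent_lt j hj.1
    rcases Sym2.eq_iff.1 hij with ⟨hv, -⟩ | ⟨hv₁, hv₂⟩
    · exact h.bijOn.injOn hi.2 hj.2 hv
    · have := h.bijOn.injOn (show i < n from hi.2) (show p j < n by omega) hv₁
      have := h.bijOn.injOn (show p i < n by omega) (show j < n from hj.2) hv₂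
      omega
  have hsub : (Finset.Ioo 0 n).image g ⊆ G.edgeFinset := by
    intro e he
    obtain ⟨i, hi, rfl⟩ := Finset.mem_image.1 he
    rw [Finset.mem_Ioo] at hi
    exact G.mem_edgeFinset.2 (h.adj_parent i hi.1 hi.2)
  have hall : (Finset.Ioo 0 n).image g = G.edgeFinset := by
    refine Finset.eq_of_subset_of_card_le hsub ?_
    have := hT.card_edgeFinset
    rw [Finset.card_image_of_injOn hg, Nat.card_Ioo]
    omega
  have : e ∈ (Finset.Ioo 0 n).image g := by rw [hall]; exact G.mem_edgeFinset.2 he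
  simpa using this

theorem injective_comp_invFunOn {α : Type} (h : G.IsParentEnumeration v p) {lab : ℕ → α}
    (hlab : InjOn lab (Iio (Fintype.card V))) :
    Injective (lab ∘ invFunOn v (Iio (Fintype.card V))) := fun u w huw => by
  rw [← h.apply_invFunOn u, ← h.apply_invFunOn w, hlab (h.invFunOn_lt u) (h.invFunOn_lt w) huw]

theorem injOn_edgeWeight (h : G.IsParentEnumeration v p) (hT : G.IsTree) {k : ℕ}
    {lab : ℕ → ZMod k} (hlab : InjOn (fun i => lab i + lab (p i)) (Ioo 0 (Fintype.card V))) :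
    InjOn (edgeWeight k (lab ∘ invFunOn v (Iio (Fintype.card V)))) G.edgeSet := by
  have hw : ∀ i ∈ Ioo 0 (Fintype.card V),
      edgeWeight k (lab ∘ invFunOn v (Iio (Fintype.card V))) s(v i, v (p i)) =
        lab i + lab (p i) := by
    rintro i ⟨hi₀, hi⟩
    simp [edgeWeight, h.invFunOn_apply hi, h.invFunOn_apply ((h.parent_lt i hi₀).trans hi)]
  intro e he e' he' hee'
  obtain ⟨i, hi, rfl⟩ := h.exists_eq_parent_edge hT he
  obtain ⟨j, hj, rfl⟩ := h.exists_eq_parent_edge hT he'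
  rw [hw i hi, hw j hj] at hee'
  rw [hlab hi hj hee']

end IsParentEnumeration

end SimpleGraph

/-- Labelings of `{0, …, 6}` are stored as base-7 numerals: the label of `i` is the digit of
`7 ^ i`. -/
def codeLabel (c i : ℕ) : ℕ := c / 7 ^ i % 7

def IsGoodCode (p : ℕ → ℕ) (c : ℕ) : Prop :=
  (∀ i < 7, ∀ j < 7, codeLabel c i = codeLabel c j → i = j) ∧
  (∀ i < 7, ∀ j < 7, 0 < i → 0 < j →
    (codeLabel c i + codeLabel c (p i)) % 7 = (codeLabel c j + codeLabel c (p j)) % 7 → i = j)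

instance (p : ℕ → ℕ) (c : ℕ) : Decidable (IsGoodCode p c) := by
  unfold IsGoodCode; infer_instance

/-- The code for the parent function `p` sits at position
`p 2 + 2 * p 3 + 6 * p 4 + 24 * p 5 + 120 * p 6` (mixed radix, as `p i < i`). -/
def goodCodes : List ℕ := [
  800667, 663663, 664839, 528129, 782145, 796257, 671013, 536361, 537243, 402885,
  654549, 796257, 786261, 800373, 769797, 800373, 786261, 786261, 800667, 798609,
  800667, 800667, 785967, 637791, 699825, 579579, 580461, 460509, 697767, 753039,
  584577, 466683, 467271, 349671, 584577, 584577, 699825, 750981, 699825, 699825,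
  569877, 637791, 650433, 767739, 436401, 769797, 654549, 570171, 800667, 785967,
  798609, 785967, 800667, 800667, 800667, 779793, 800667, 800667, 584283, 695415,
  798609, 798609, 578109, 699531, 697179, 464331, 436401, 769797, 434343, 671013,
  436401, 570171, 786261, 769797, 786261, 786261, 800373, 695415, 664839, 782145,
  465213, 798609, 697767, 584577, 465213, 798609, 448749, 699825, 465213, 584577,
  697767, 798609, 798021, 699825, 697767, 695415, 782145, 654549, 671013, 786261,
  467271, 800667, 782145, 654549, 671013, 800667, 452865, 697767, 796257, 699531,
  699825, 786261, 467271, 786261, 650433, 697767, 699825, 800667, 785967, 800667,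
  800667, 781263, 782145, 763035, 798609, 349671, 786261, 769209, 769797, 753039,
  786261, 786261, 800667, 347613, 800667, 800667, 670719, 335265, 448749, 465213,
  537243, 467271, 452865, 671013, 800667, 798021, 798609, 796257, 800667, 800667,
  800667, 800373, 800667, 800667, 762741, 662487, 798609, 798609, 766857, 670719,
  517545, 637791, 798021, 767739, 654549, 671013, 637497, 769797, 786261, 318801,
  786261, 786261, 699531, 349671, 769797, 769797, 781263, 699531, 560763, 695415,
  695415, 347613, 562821, 699531, 699531, 699531, 654549, 769797, 452865, 570171,
  452865, 769797, 563997, 436401, 580461, 452865, 467271, 699825, 769209, 782145,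
  697767, 699825, 695121, 798609, 697767, 798609, 467271, 584577, 467271, 798609,
  697767, 563997, 697767, 699825, 695121, 699825, 570171, 434343, 763035, 786261,
  699825, 800667, 584577, 654549, 699825, 800667, 671013, 786261, 584577, 697767,
  697179, 800667, 465213, 800667, 584283, 697767, 699825, 697767, 699825, 537243,
  699825, 584283, 697767, 584283, 699825, 699825, 699825, 578109, 699825, 699825,
  785967, 796257, 697767, 697767, 779793, 800373, 798021, 766857, 537243, 467271,
  535185, 570171, 537243, 671013, 584577, 520485, 584577, 584577, 800373, 753039,
  467271, 467271, 579579, 800373, 661605, 796257, 796257, 750981, 663663, 800373,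
  800373, 800373, 452865, 467271, 654549, 671013, 654549, 467271, 654549, 654549,
  750981, 785967, 769209, 781263, 753039, 779793, 649257, 785967, 785967, 785967,
  763035, 779205, 779793, 779793, 798021, 798021, 654549, 779205, 535185, 671013,
  654549, 671013, 580461, 452865, 563997, 584577, 580461, 699825, 467271, 452865,
  697767, 699825, 697767, 452865, 697767, 750393, 563997, 699825, 697767, 699825,
  448749, 779205, 448749, 465213, 800373, 465213, 584577, 654549, 671013, 654549,
  699825, 748335, 570171, 580461, 699825, 697767, 570171, 570171, 584577, 697767,
  699825, 448749, 699825, 584577, 796257, 537243, 436401, 434343, 452865, 570171,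
  584577, 467271, 584577, 584577, 699531, 796257, 563997, 580461, 767739, 697767,
  798609, 786261, 767739, 697767, 650433, 800667, 767739, 786261, 798609, 697767,
  697179, 800667, 798609, 796257, 664839, 537243, 782145, 654549, 769797, 800667,
  466683, 580461, 798609, 800667, 795963, 697767, 798609, 697767, 769797, 786261,
  769797, 697767, 798609, 664839, 798609, 800667, 795963, 800667, 782145, 654549,
  664839, 786261, 782145, 800667, 769797, 654549, 798609, 800667, 798609, 654549,
  798609, 347025, 664839, 800667, 798609, 800667, 650433, 577521, 650433, 767739,
  699531, 767739, 769797, 654549, 653961, 786261, 769797, 753039, 769797, 650433,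
  769797, 786261, 752745, 786261, 664839, 519897, 664839, 782145, 670719, 782145,
  779793, 779205, 779793, 796257, 762741, 796257, 584577, 670719, 452865, 452865,
  570171, 570171, 584577, 650433, 467271, 467271, 584577, 584577, 767739, 767739,
  782145, 782145, 569877, 670719, 650433, 767739, 452865, 467271, 452865, 570171,
  580461, 452865, 570171, 584577, 769797, 699825, 580461, 452865, 570171, 699825,
  654549, 798609, 695415, 800373, 800667, 584577, 769797, 584577, 448749, 798609,
  800667, 699825, 584283, 699825, 671013, 535185, 460509, 584577, 800667, 699825,
  786261, 452865, 800667, 699825, 570171, 584577, 786261, 798609, 798021, 699825,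
  767739, 699825, 785967, 798609, 800667, 798609, 800667, 436401, 786261, 452865,
  570171, 452865, 800667, 344967, 671013, 782145, 800667, 798609, 671013, 671013,
  786261, 798609, 800667, 650433, 800667, 786261, 695415, 436401, 537243, 535185,
  654549, 671013, 786261, 569877, 654549, 654549, 671013, 671013, 786261, 448749,
  769797, 769797, 786261, 786261, 465213, 465213, 580461, 580461, 670719, 569877,
  448749, 465213, 654549, 769797, 654549, 671013, 767739, 650433, 767739, 654549,
  671013, 513723, 645729, 782145, 767739, 654549, 671013, 786261, 767739, 750981,
  748629, 782145, 662487, 786261, 518427, 750981, 753039, 633675, 785967, 800373,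
  537243, 467271, 584577, 570171, 798609, 671013, 699825, 563997, 402885, 570171,
  786261, 671013, 800667, 467271, 584577, 467271, 786261, 301749, 800667, 584283,
  697767, 697767, 699825, 699825, 537243, 467271, 584577, 671013, 697767, 769797,
  800667, 467271, 786261, 671013, 584577, 570171, 699825, 767739, 786261, 769797,
  699825, 699825, 800667, 434343, 798609, 798609, 800667, 800667, 637791, 785967,
  786261, 570171, 798609, 570171, 800667, 769797, 769209, 671013, 782145, 671013,
  800667, 769797, 786261, 664839, 800667, 800667, 436401, 436401, 537243, 537243,
  699531, 584283, 434343, 769797, 786261, 671013, 569877, 671013, 800373, 769797,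
  786261, 769797, 786261, 465213, 637791, 465213, 580461, 563997, 697767, 699825,
  434343, 436401, 697767, 798609, 697767, 699825, 436401, 767739, 796257, 767739,
  569877, 570171, 782145, 664839, 782145, 467271, 584577, 570171, 561645, 767739,
  782145, 467271, 699825, 800667, 436401, 537243, 436401, 697767, 699825, 800667]

theorem isGoodCode_goodCodes : ∀ a₂ < 2, ∀ a₃ < 3, ∀ a₄ < 4, ∀ a₅ < 5, ∀ a₆ < 6,
    IsGoodCode (fun i => [0, 0, a₂, a₃, a₄, a₅, a₆].getD i 0)
      (goodCodes.getD (a₂ + 2 * a₃ + 6 * a₄ + 24 * a₅ + 120 * a₆) 0) := by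
  decide +kernel

theorem exists_labeling_injOn_of_parent_lt (p : ℕ → ℕ) (hp : ∀ i, 0 < i → p i < i) :
    ∃ lab : ℕ → ZMod 7,
      InjOn lab (Iio 7) ∧ InjOn (fun i => lab i + lab (p i)) (Ioo 0 7) := by
  set q : ℕ → ℕ := fun i => [0, 0, p 2, p 3, p 4, p 5, p 6].getD i 0
  have hq : ∀ i ∈ Ioo 0 7, q i = p i := by
    rintro i ⟨hi₀, hi⟩
    have hp₁ : p 1 = 0 := by have := hp 1 one_pos; omega
    interval_cases i <;> simp [q, hp₁]
  set c := goodCodes.getD (p 2 + 2 * p 3 + 6 * p 4 + 24 * p 5 + 120 * p 6) 0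
  obtain ⟨hlab, hsum⟩ : IsGoodCode q c :=
    isGoodCode_goodCodes (p 2) (hp 2 (by omega)) (p 3) (hp 3 (by omega))
      (p 4) (hp 4 (by omega)) (p 5) (hp 5 (by omega)) (p 6) (hp 6 (by omega))
  refine ⟨fun i => (codeLabel c i : ZMod 7), ?_, ?_⟩
  · intro i hi j hj hij
    rw [ZMod.natCast_eq_natCast_iff'] at hij
    simp only [codeLabel, Nat.mod_mod] at hij
    exact hlab i hi j hj hij
  · intro i hi j hj hij
    simp only [← Nat.cast_add, ZMod.natCast_eq_natCast_iff'] at hij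
    rw [← hq i hi, ← hq j hj] at hij
    exact hsum i hi.2 j hj.2 hi.1 hj.1 hij

/-- Every tree on at most seven vertices is 7-cordial. -/
theorem tree_le_seven_is_seven_cordial {V : Type} [Fintype V] [DecidableEq V]
    (G : SimpleGraph V) [DecidableRel G.Adj] (hT : G.IsTree)
    (hcard : Fintype.card V ≤ 7) :
    ∃ f : V → ZMod 7, IsCordialLabeling 7 G f := by
  have : Nonempty V := hT.connected.nonempty
  obtain ⟨v, p, hvp⟩ := hT.connected.preconnected.exists_isParentEnumeration
  obtain ⟨lab, hlab, hsum⟩ := exists_labeling_injOn_of_parent_lt p hvp.parent_lt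
  exact ⟨_, isCordialLabeling_of_injective G
    (hvp.injective_comp_invFunOn (hlab.mono (Iio_subset_Iio hcard)))
    (hvp.injOn_edgeWeight hT (hsum.mono (Ioo_subset_Ioo_right hcard)))⟩
end
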